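/- arXiv:1603.00973 — 3 statements merged into one kernel-verified Lean document; each statement's English description precedes it below -/
import Mathlib

section
/- Let (X,d) be a metric space, S and O finite nonempty sets of points in X, and j a point of X. Let s_j ∈ S minimize d(j,·) over S, o_j ∈ O minimize d(j,·) over O, φ : O → S map each i* ∈ O to a nearest point of S, and for i ∈ S with φ⁻¹(i) nonempty let cent(i) ∈ φ⁻¹(i) minimize d(i,·) over φ⁻¹(i). If φ⁻¹(φ(o_j)) is nonempty, then d(j, cent(φ(o_j))) - d(j, s_j) ≤ 3·d(j, o_j) + d(j, s_j). -/
/-- If `cent(φ(o_j))` is the point of `φ⁻¹(φ(o_j))` nearest to `φ(o_j)`, then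
`d(j, cent(φ(o_j))) - d(j, s_j) ≤ 3 d(j, o_j) + d(j, s_j)`. -/
theorem stmt_1 {X : Type*} [MetricSpace X] (S O : Finset X) (hS : S.Nonempty) (hO : O.Nonempty)
    (j sj oj : X) (φ : X → X) (cent : X → X)
    (hsj : sj ∈ S) (hsj_min : ∀ i ∈ S, dist j sj ≤ dist j i)
    (hoj : oj ∈ O) (hoj_min : ∀ i ∈ O, dist j oj ≤ dist j i)
    (hφ : ∀ i ∈ O, φ i ∈ S) (hφ_min : ∀ i ∈ O, ∀ i' ∈ S, dist i (φ i) ≤ dist i i')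
    -- `cent(φ(o_j))` lies in the preimage `φ⁻¹(φ(o_j)) ∩ O` (which is nonempty,
    -- containing `o_j`) and minimizes the distance to `φ(o_j)` over that preimage:
    (hc_mem : cent (φ oj) ∈ O) (hc_pre : φ (cent (φ oj)) = φ oj)
    (hc_min : ∀ i ∈ O, φ i = φ oj → dist (φ oj) (cent (φ oj)) ≤ dist (φ oj) i) :
    dist j (cent (φ oj)) - dist j sj ≤ 3 * dist j oj + dist j sj := by
  have h1 : dist j (cent (φ oj)) ≤ dist j oj + dist oj (φ oj) + dist (φ oj) (cent (φ oj)) := by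
    calc dist j (cent (φ oj)) ≤ dist j (φ oj) + dist (φ oj) (cent (φ oj)) := dist_triangle _ _ _
    _ ≤ dist j oj + dist oj (φ oj) + dist (φ oj) (cent (φ oj)) := by
        have := dist_triangle j oj (φ oj); linarith
  have h2 : dist (φ oj) (cent (φ oj)) ≤ dist (φ oj) oj := hc_min oj hoj rfl
  have h3 : dist oj (φ oj) ≤ dist oj sj := hφ_min oj hoj sj hsj
  have h4 : dist oj sj ≤ dist oj j + dist j sj := dist_triangle _ _ _
  have h5 : dist (φ oj) oj = dist oj (φ oj) := dist_comm _ _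
  have h6 : dist oj j = dist j oj := dist_comm _ _
  linarith
end

section
/- For all integers p, ℓ with 1 ≤ p ≤ ℓ/2, set β = 2p and α = β·(ℓ - p). Then (α·(p+1) + β·p·ℓ + p²·(ℓ+1)) / (p²·(ℓ+1)) ≥ 5 + 2/p - 10p/(ℓ+1). -/
/-- Locality gap ratio: with `β = 2p`, `α = β(ℓ-p)`, the local/global cost ratio is at
least `5 + 2/p - 10p/(ℓ+1)`. -/
theorem stmt_4 (p ℓ : ℤ) (hp : 1 ≤ p) (hℓ : 2 * p ≤ ℓ) :
    ((2 * (p : ℝ) * ((ℓ : ℝ) - p)) * (p + 1) + (2 * p) * p * ℓ + p ^ 2 * (ℓ + 1))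
        / (p ^ 2 * (ℓ + 1))
      ≥ 5 + 2 / (p : ℝ) - 10 * p / ((ℓ : ℝ) + 1) := by
  have hp' : (1 : ℝ) ≤ p := by exact_mod_cast hp
  have hℓ' : 2 * (p : ℝ) ≤ ℓ := by exact_mod_cast hℓ
  have hpp : (0 : ℝ) < p := by linarith
  have hL : (0 : ℝ) < (ℓ : ℝ) + 1 := by linarith
  rw [ge_iff_le, ← sub_nonneg]
  have key : ((2 * (p : ℝ) * ((ℓ : ℝ) - p)) * (p + 1) + (2 * p) * p * ℓ + p ^ 2 * (ℓ + 1))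
        / (p ^ 2 * (ℓ + 1)) - (5 + 2 / (p : ℝ) - 10 * p / ((ℓ : ℝ) + 1))
      = (2 * p * (4 * p + 1) * (p - 1)) / (p ^ 2 * (ℓ + 1)) := by
    field_simp
    ring
  rw [key]
  apply div_nonneg
  · nlinarith
  · positivity
end

section
/- Fix integers p ≥ 1 and ℓ ≥ 2p, with β = 2p and α = 2p(ℓ-p). For all integers R, B, B' with 1 ≤ R ≤ p, 0 ≤ B ≤ p, 0 ≤ B' ≤ min(B, Rℓ), we have 2B·(p - B + B') + β·(R·ℓ - 2B') - α·R ≥ 0. -/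
/-- Locality gap verification, case `R ≥ 1` with the leader kept. -/
theorem stmt_6 (p ℓ R B B' : ℤ) (hp : 1 ≤ p) (hℓ : 2 * p ≤ ℓ)
    (hR1 : 1 ≤ R) (hRp : R ≤ p) (hB0 : 0 ≤ B) (hBp : B ≤ p)
    (hB'0 : 0 ≤ B') (hB' : B' ≤ min B (R * ℓ)) :
    2 * B * (p - B + B') + (2 * p) * (R * ℓ - 2 * B') - (2 * p * (ℓ - p)) * R ≥ 0 := by
  have h1 : B' ≤ B := le_trans hB' (min_le_left _ _)
  nlinarith [mul_nonneg (sub_nonneg.2 h1) (sub_nonneg.2 hBp),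
    mul_nonneg (sub_nonneg.2 hR1) (sub_nonneg.2 hBp),
    mul_nonneg hB0 (sub_nonneg.2 hBp),
    mul_nonneg (mul_nonneg hB'0 (sub_nonneg.2 hBp)) (by linarith : (0:ℤ) ≤ 1),
    mul_nonneg (sub_nonneg.2 h1) (by linarith : (0:ℤ) ≤ 2*p - B),
    mul_nonneg (by linarith : (0:ℤ) ≤ p) (by nlinarith : (0:ℤ) ≤ p*R - B)]
end
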